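/- Let S, L, A, M, Y be discrete random variables, and let \hat{T1}, \hat{T2}, \hat{e}, \hat{f}, \hat{g}, \hat{h}, \hat{\gamma} be arbitrary (fixed, nonrandom) functions with denominators bounded away from zero and \hat{\gamma} = 1/P(S=0). Define T1, T2, e, f, g, h as the true nuisance functions. Then the first-order bias E[H(\hat{\gamma}, \hat{e}, \hat{f}, \hat{g}, \hat{h}, \hat{T2}, \hat{T1})] - \Psi^a can be written as a finite sum of terms, each of which is an expectation of a product of two nuisance-function differences (e.g., (T1 - \hat{T1}) times (e - \hat{e}), (T1 - \hat{T1}) times (f - \hat{f}), (T1 - \hat{T1}) times (g - \hat{g}), (T2 - \hat{T2}) times (e - \hat{e}), (T2 - \hat{T2}) times (h - \hat{h}), (T1 - \hat{T1}) times (h - \hat{h})) multiplied by bounded weights; in particular, if all products of paired differences vanish almost surely, the bias is zero. -/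
import Mathlib


open Finset
open scoped Classical

noncomputable section

/-- Probability of an event under weight function `w`. -/
def Pr {Ω : Type*} [Fintype Ω] (w : Ω → ℝ) (E : Ω → Prop) : ℝ :=
  ∑ ω, if E ω then w ω else 0

/-- Conditional probability `P(E | F)`. -/
def CP {Ω : Type*} [Fintype Ω] (w : Ω → ℝ) (E F : Ω → Prop) : ℝ :=
  Pr w (fun ω => E ω ∧ F ω) / Pr w F

/-- Conditional expectation `E[X | F]`. -/
def CE {Ω : Type*} [Fintype Ω] (w : Ω → ℝ) (X : Ω → ℝ) (F : Ω → Prop) : ℝ :=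
  (∑ ω, if F ω then w ω * X ω else 0) / Pr w F

/-- The estimating function `H` built from working nuisance functions. -/
def Hfun {Ω 𝕃 𝕄 𝔸 : Type*}
    (S : Ω → ℕ) (L : Ω → 𝕃) (A : Ω → 𝔸) (M : Ω → 𝕄) (Y : Ω → ℝ) (a : 𝔸)
    (γ : ℝ) (e : 𝕃 → ℝ) (f : 𝕄 → 𝕃 → ℝ) (g : ℕ → 𝕃 → 𝕄 → ℝ) (h : ℕ → 𝕃 → ℝ)
    (T2 : 𝕃 → 𝔸 → ℝ) (T1 : 𝕃 → 𝕄 → ℝ) (ω : Ω) : ℝ :=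
  γ * ((if S ω = 0 then (1:ℝ) else 0) * f (M ω) (L ω) * g 1 (L ω) (M ω) /
        (e (L ω) * g 0 (L ω) (M ω)) * (Y ω - T1 (L ω) (M ω)) +
      (if S ω = 1 ∧ A ω = a then (1:ℝ) else 0) * h 0 (L ω) /
        (e (L ω) * h 1 (L ω)) * (T1 (L ω) (M ω) - T2 (L ω) (A ω)) +
      (if S ω = 0 then (1:ℝ) else 0) * T2 (L ω) a)

/-- The identified g-formula functional `Ψ^a`. -/
def PsiA {Ω 𝕃 𝕄 𝔸 : Type*} [Fintype Ω] [Fintype 𝕃] [Fintype 𝕄]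
    (w : Ω → ℝ) (S : Ω → ℕ) (L : Ω → 𝕃) (A : Ω → 𝔸) (M : Ω → 𝕄)
    (Y : Ω → ℝ) (a : 𝔸) : ℝ :=
  ∑ m : 𝕄, ∑ l : 𝕃,
    CE w Y (fun ω => M ω = m ∧ L ω = l ∧ S ω = 0) *
    CP w (fun ω => M ω = m) (fun ω => L ω = l ∧ A ω = a ∧ S ω = 1) *
    CP w (fun ω => L ω = l) (fun ω => S ω = 0)

lemma ite_congr'' {α : Sort*} {p q : Prop} {i1 : Decidable p} {i2 : Decidable q}
    (h : p ↔ q) (x y : α) : (@ite _ p i1 x y) = (@ite _ q i2 x y) := by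
  by_cases hp : p
  · rw [if_pos hp, if_pos (h.mp hp)]
  · rw [if_neg hp, if_neg (fun hq => hp (h.mpr hq))]

lemma Pr_congr' {Ω : Type*} [Fintype Ω] (w : Ω → ℝ) {E F : Ω → Prop}
    (h : ∀ ω, E ω ↔ F ω) : Pr w E = Pr w F :=
  Finset.sum_congr rfl fun ω _ => ite_congr'' (h ω) _ _

lemma sum_ite_congr' {Ω : Type*} [Fintype Ω] (f : Ω → ℝ) {E F : Ω → Prop}
    {i1 : ∀ ω, Decidable (E ω)} {i2 : ∀ ω, Decidable (F ω)}
    (h : ∀ ω, E ω ↔ F ω) :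
    (∑ ω, @ite _ (E ω) (i1 ω) (f ω) 0) = ∑ ω, @ite _ (F ω) (i2 ω) (f ω) 0 :=
  Finset.sum_congr rfl fun ω _ => ite_congr'' (h ω) _ _

lemma Pr_mono' {Ω : Type*} [Fintype Ω] {w : Ω → ℝ} (hw : ∀ ω, 0 ≤ w ω)
    {E F : Ω → Prop} (h : ∀ ω, E ω → F ω) : Pr w E ≤ Pr w F := by
  apply Finset.sum_le_sum
  intro ω _
  by_cases hE : E ω
  · rw [if_pos hE, if_pos (h ω hE)]
  · rw [if_neg hE]
    by_cases hF : F ω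
    · rw [if_pos hF]; exact hw ω
    · rw [if_neg hF]

lemma sum_fiber' {Ω 𝕄 : Type*} [Fintype Ω] [Fintype 𝕄] (w : Ω → ℝ)
    (E : Ω → Prop) (M : Ω → 𝕄) :
    ∑ m, Pr w (fun ω => E ω ∧ M ω = m) = Pr w E := by
  unfold Pr
  rw [Finset.sum_comm]
  apply Finset.sum_congr rfl
  intro ω _
  by_cases hE : E ω
  · rw [if_pos hE]
    simp [hE]
  · rw [if_neg hE]
    exact Finset.sum_eq_zero fun m _ => if_neg (by tauto)

lemma fiber_sum' {Ω 𝕃 𝕄 : Type*} [Fintype Ω] [Fintype 𝕃] [Fintype 𝕄]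
    (F : Ω → ℝ) (ψ : 𝕃 → 𝕄 → ℝ) (L : Ω → 𝕃) (M : Ω → 𝕄) :
    ∑ ω, ψ (L ω) (M ω) * F ω
      = ∑ l, ∑ m, ψ l m * ∑ ω, (if L ω = l ∧ M ω = m then F ω else 0) := by
  have h1 : ∀ ω, ψ (L ω) (M ω) * F ω
      = ∑ l, ∑ m, (if L ω = l ∧ M ω = m then ψ l m * F ω else 0) := by
    intro ω
    rw [Finset.sum_eq_single (L ω)]
    · rw [Finset.sum_eq_single (M ω)]
      · simp
      · intro m _ hm
        exact if_neg (by rintro ⟨-, h⟩; exact hm h.symm)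
      · simp
    · intro l _ hl
      exact Finset.sum_eq_zero fun m _ => if_neg (by rintro ⟨h, -⟩; exact hl h.symm)
    · simp
  calc ∑ ω, ψ (L ω) (M ω) * F ω
      = ∑ ω, ∑ l, ∑ m, (if L ω = l ∧ M ω = m then ψ l m * F ω else 0) :=
        Finset.sum_congr rfl fun ω _ => h1 ω
    _ = ∑ l, ∑ ω, ∑ m, (if L ω = l ∧ M ω = m then ψ l m * F ω else 0) :=
        Finset.sum_comm
    _ = ∑ l, ∑ m, ∑ ω, (if L ω = l ∧ M ω = m then ψ l m * F ω else 0) :=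
        Finset.sum_congr rfl fun l _ => Finset.sum_comm
    _ = ∑ l, ∑ m, ψ l m * ∑ ω, (if L ω = l ∧ M ω = m then F ω else 0) := by
        simp only [Finset.mul_sum, mul_ite, mul_zero]

lemma key1' (eh gh0 gh1 hhat0 hhat1 f fh g0 g1 h0 h1 d : ℝ)
    (heh : eh ≠ 0) (hgh0 : gh0 ≠ 0) (hhh1 : hhat1 ≠ 0)
    (q2 : d * (f - fh) = 0) (q30 : d * (g0 - gh0) = 0) (q31 : d * (g1 - gh1) = 0)
    (q60 : d * (h0 - hhat0) = 0) (q61 : d * (h1 - hhat1) = 0) :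
    (fh * gh1 / (eh * gh0) * g0 * h0 - hhat0 / (eh * hhat1) * f * g1 * h1) * d = 0 := by
  have key : (fh * gh1 * hhat1 * g0 * h0 - hhat0 * gh0 * f * g1 * h1) * d = 0 := by
    linear_combination (fh*gh1*hhat1*h0) * q30 + (fh*gh1*hhat1*gh0) * q60
      - (gh1*hhat1*gh0*hhat0) * q2 - (f*hhat1*gh0*hhat0) * q31 - (f*g1*gh0*hhat0) * q61
  have h2 : (fh * gh1 / (eh * gh0) * g0 * h0 - hhat0 / (eh * hhat1) * f * g1 * h1) * d
      = ((fh * gh1 * hhat1 * g0 * h0 - hhat0 * gh0 * f * g1 * h1) * d) / (eh * gh0 * hhat1) := by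
    rw [eq_div_iff (mul_ne_zero (mul_ne_zero heh hgh0) hhh1)]
    field_simp
  rw [h2, key, zero_div]

lemma key2' (eh hhat0 hhat1 e h0 h1 d : ℝ) (heh : eh ≠ 0) (hhh1 : hhat1 ≠ 0)
    (q4 : d * (e - eh) = 0) (q50 : d * (h0 - hhat0) = 0) (q51 : d * (h1 - hhat1) = 0) :
    (hhat0 / (eh * hhat1) * h1 * e - h0) * d = 0 := by
  have key : (hhat0 * h1 * e - h0 * (eh * hhat1)) * d = 0 := by
    linear_combination (hhat0*h1)*q4 + (eh*hhat0)*q51 - (eh*hhat1)*q50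
  have h2 : (hhat0 / (eh * hhat1) * h1 * e - h0) * d
      = ((hhat0 * h1 * e - h0 * (eh * hhat1)) * d) / (eh * hhat1) := by
    rw [eq_div_iff (mul_ne_zero heh hhh1)]
    field_simp
  rw [h2, key, zero_div]

lemma aux_div (t q d p : ℝ) (hd : d ≠ 0) (hp : p ≠ 0) :
    (t * d) * (q / (d * p)) = (1 / p) * (t * q) := by
  field_simp

/-- second-order product-bias structure — if every paired
product of nuisance-function differences vanishes, the first-order bias of
the estimating function is zero. -/
theorem product_bias_structure
    {Ω 𝕃 𝕄 𝔸 : Type*} [Fintype Ω] [Fintype 𝕃] [Fintype 𝕄] [Fintype 𝔸]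
    (w : Ω → ℝ) (hw0 : ∀ ω, 0 ≤ w ω) (hw1 : ∑ ω, w ω = 1)
    (S : Ω → ℕ) (L : Ω → 𝕃) (A : Ω → 𝔸) (M : Ω → 𝕄) (Y : Ω → ℝ) (a : 𝔸)
    (hposS0 : Pr w (fun ω => S ω = 0) > 0)
    (hpos : ∀ m l a' s, s = 0 ∨ s = 1 →
      Pr w (fun ω => S ω = s ∧ M ω = m ∧ L ω = l) > 0 ∧
      Pr w (fun ω => S ω = s ∧ A ω = a' ∧ L ω = l) > 0 ∧
      Pr w (fun ω => L ω = l) > 0)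
    -- true nuisance functions
    (e : 𝕃 → ℝ) (f : 𝕄 → 𝕃 → ℝ) (g : ℕ → 𝕃 → 𝕄 → ℝ) (h : ℕ → 𝕃 → ℝ)
    (T1 : 𝕃 → 𝕄 → ℝ) (T2 : 𝕃 → 𝔸 → ℝ)
    (he : ∀ l, e l = CP w (fun ω => A ω = a) (fun ω => S ω = 1 ∧ L ω = l))
    (hf : ∀ m l, f m l =
      CP w (fun ω => A ω = a) (fun ω => S ω = 1 ∧ M ω = m ∧ L ω = l))
    (hg : ∀ s m l, g s l m = CP w (fun ω => M ω = m) (fun ω => S ω = s ∧ L ω = l))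
    (hh : ∀ s l, h s l = CP w (fun ω => S ω = s) (fun ω => L ω = l))
    (hT1 : ∀ l m, T1 l m = CE w Y (fun ω => L ω = l ∧ M ω = m ∧ S ω = 0))
    (hT2 : ∀ l a', T2 l a' = ∑ m : 𝕄,
      T1 l m * CP w (fun ω => M ω = m) (fun ω => L ω = l ∧ A ω = a' ∧ S ω = 1))
    -- fixed working nuisance functions with denominators bounded away from 0
    (eh : 𝕃 → ℝ) (fh : 𝕄 → 𝕃 → ℝ) (gh : ℕ → 𝕃 → 𝕄 → ℝ) (hhat : ℕ → 𝕃 → ℝ)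
    (T1h : 𝕃 → 𝕄 → ℝ) (T2h : 𝕃 → 𝔸 → ℝ) (ε : ℝ) (hε : ε > 0)
    (hehb : ∀ l, ε ≤ eh l) (hghb : ∀ s m l, ε ≤ gh s l m) (hhhatb : ∀ s l, ε ≤ hhat s l)
    (hfhb : ∀ m l, |fh m l| ≤ 1) (hT1hb : ∃ C : ℝ, ∀ l m, |T1h l m| ≤ C)
    (hT2hb : ∃ C : ℝ, ∀ l a', |T2h l a'| ≤ C)
    -- all paired products of nuisance differences vanish
    (p1 : ∀ l m, (T1 l m - T1h l m) * (e l - eh l) = 0)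
    (p2 : ∀ l m, (T1 l m - T1h l m) * (f m l - fh m l) = 0)
    (p3 : ∀ s l m, (T1 l m - T1h l m) * (g s l m - gh s l m) = 0)
    (p4 : ∀ l a', (T2 l a' - T2h l a') * (e l - eh l) = 0)
    (p5 : ∀ s l a', (T2 l a' - T2h l a') * (h s l - hhat s l) = 0)
    (p6 : ∀ s l m, (T1 l m - T1h l m) * (h s l - hhat s l) = 0) :
    (∑ ω, w ω *
        Hfun S L A M Y a (1 / Pr w (fun ω => S ω = 0)) eh fh gh hhat T2h T1h ω) -
      PsiA w S L A M Y a = 0 := by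
  classical
  have heh0 : ∀ l, eh l ≠ 0 := fun l => ne_of_gt (lt_of_lt_of_le hε (hehb l))
  have hghne : ∀ s m l, gh s l m ≠ 0 := fun s m l => ne_of_gt (lt_of_lt_of_le hε (hghb s m l))
  have hhhne : ∀ s l, hhat s l ≠ 0 := fun s l => ne_of_gt (lt_of_lt_of_le hε (hhhatb s l))
  have hΩ : Nonempty Ω := by
    by_contra hn
    rw [not_nonempty_iff] at hn
    have h0 : Pr w (fun ω => S ω = 0) = 0 := by
      unfold Pr; rw [Finset.univ_eq_empty, Finset.sum_empty]
    linarith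
  obtain ⟨ω0⟩ := hΩ
  -- positivity facts
  have hPl : ∀ l, (0:ℝ) < Pr w (fun ω => L ω = l) :=
    fun l => (hpos (M ω0) l a 0 (Or.inl rfl)).2.2
  have hP0lm : ∀ l m, (0:ℝ) < Pr w (fun ω => S ω = 0 ∧ L ω = l ∧ M ω = m) := by
    intro l m
    have h1 := (hpos m l a 0 (Or.inl rfl)).1
    have h2 : Pr w (fun ω => S ω = 0 ∧ M ω = m ∧ L ω = l)
        = Pr w (fun ω => S ω = 0 ∧ L ω = l ∧ M ω = m) := Pr_congr' w fun ω => by tauto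
    linarith
  have hP1lm : ∀ l m, (0:ℝ) < Pr w (fun ω => S ω = 1 ∧ M ω = m ∧ L ω = l) :=
    fun l m => (hpos m l a 1 (Or.inr rfl)).1
  have hP1al : ∀ l, (0:ℝ) < Pr w (fun ω => S ω = 1 ∧ A ω = a ∧ L ω = l) :=
    fun l => (hpos (M ω0) l a 1 (Or.inr rfl)).2.1
  have hP0al : ∀ l, (0:ℝ) < Pr w (fun ω => S ω = 0 ∧ A ω = a ∧ L ω = l) :=
    fun l => (hpos (M ω0) l a 0 (Or.inl rfl)).2.1
  have hP0l : ∀ l, (0:ℝ) < Pr w (fun ω => S ω = 0 ∧ L ω = l) :=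
    fun l => lt_of_lt_of_le (hP0al l) (Pr_mono' hw0 fun ω hx => ⟨hx.1, hx.2.2⟩)
  have hP1l : ∀ l, (0:ℝ) < Pr w (fun ω => S ω = 1 ∧ L ω = l) :=
    fun l => lt_of_lt_of_le (hP1al l) (Pr_mono' hw0 fun ω hx => ⟨hx.1, hx.2.2⟩)
  -- nuisance identities
  have He : ∀ l, Pr w (fun ω => S ω = 1 ∧ A ω = a ∧ L ω = l)
      = e l * Pr w (fun ω => S ω = 1 ∧ L ω = l) := by
    intro l
    rw [he l]
    unfold CP
    rw [div_mul_cancel₀ _ (ne_of_gt (hP1l l))]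
    exact Pr_congr' w fun ω => by tauto
  have Hf : ∀ l m, Pr w (fun ω => S ω = 1 ∧ A ω = a ∧ L ω = l ∧ M ω = m)
      = f m l * Pr w (fun ω => S ω = 1 ∧ M ω = m ∧ L ω = l) := by
    intro l m
    rw [hf m l]
    unfold CP
    rw [div_mul_cancel₀ _ (ne_of_gt (hP1lm l m))]
    exact Pr_congr' w fun ω => by tauto
  have Hg1 : ∀ l m, Pr w (fun ω => S ω = 1 ∧ M ω = m ∧ L ω = l)
      = g 1 l m * Pr w (fun ω => S ω = 1 ∧ L ω = l) := by
    intro l m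
    rw [hg 1 m l]
    unfold CP
    rw [div_mul_cancel₀ _ (ne_of_gt (hP1l l))]
    exact Pr_congr' w fun ω => by tauto
  have Hg0 : ∀ l m, Pr w (fun ω => S ω = 0 ∧ L ω = l ∧ M ω = m)
      = g 0 l m * Pr w (fun ω => S ω = 0 ∧ L ω = l) := by
    intro l m
    rw [hg 0 m l]
    unfold CP
    rw [div_mul_cancel₀ _ (ne_of_gt (hP0l l))]
    exact Pr_congr' w fun ω => by tauto
  have Hh0 : ∀ l, Pr w (fun ω => S ω = 0 ∧ L ω = l)
      = h 0 l * Pr w (fun ω => L ω = l) := by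
    intro l
    rw [hh 0 l]
    unfold CP
    rw [div_mul_cancel₀ _ (ne_of_gt (hPl l))]
  have Hh1 : ∀ l, Pr w (fun ω => S ω = 1 ∧ L ω = l)
      = h 1 l * Pr w (fun ω => L ω = l) := by
    intro l
    rw [hh 1 l]
    unfold CP
    rw [div_mul_cancel₀ _ (ne_of_gt (hPl l))]
  have HT1 : ∀ l m, (∑ ω, if S ω = 0 ∧ L ω = l ∧ M ω = m then w ω * Y ω else 0)
      = T1 l m * Pr w (fun ω => S ω = 0 ∧ L ω = l ∧ M ω = m) := by
    intro l m
    rw [hT1 l m]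
    unfold CE
    rw [show Pr w (fun ω => L ω = l ∧ M ω = m ∧ S ω = 0)
        = Pr w (fun ω => S ω = 0 ∧ L ω = l ∧ M ω = m) from Pr_congr' w fun ω => by tauto]
    rw [div_mul_cancel₀ _ (ne_of_gt (hP0lm l m))]
    exact sum_ite_congr' _ fun ω => by tauto
  have HT2 : ∀ l, T2 l a * Pr w (fun ω => S ω = 1 ∧ A ω = a ∧ L ω = l)
      = ∑ m, T1 l m * Pr w (fun ω => S ω = 1 ∧ A ω = a ∧ L ω = l ∧ M ω = m) := by
    intro l
    rw [hT2 l a, Finset.sum_mul]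
    apply Finset.sum_congr rfl
    intro m _
    unfold CP
    rw [show Pr w (fun ω => L ω = l ∧ A ω = a ∧ S ω = 1)
        = Pr w (fun ω => S ω = 1 ∧ A ω = a ∧ L ω = l) from Pr_congr' w fun ω => by tauto]
    rw [show Pr w (fun ω => M ω = m ∧ (L ω = l ∧ A ω = a ∧ S ω = 1))
        = Pr w (fun ω => S ω = 1 ∧ A ω = a ∧ L ω = l ∧ M ω = m) from
        Pr_congr' w fun ω => by tauto]
    rw [mul_assoc, div_mul_cancel₀ _ (ne_of_gt (hP1al l))]
  -- collapse of m-sums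
  have hcol0 : ∀ l, (∑ m, Pr w (fun ω => S ω = 0 ∧ L ω = l ∧ M ω = m))
      = Pr w (fun ω => S ω = 0 ∧ L ω = l) := by
    intro l
    calc ∑ m, Pr w (fun ω => S ω = 0 ∧ L ω = l ∧ M ω = m)
        = ∑ m, Pr w (fun ω => (S ω = 0 ∧ L ω = l) ∧ M ω = m) :=
          Finset.sum_congr rfl fun m _ => Pr_congr' w fun ω => by tauto
      _ = Pr w (fun ω => S ω = 0 ∧ L ω = l) := sum_fiber' w _ M
  have hcol1 : ∀ l, (∑ m, Pr w (fun ω => S ω = 1 ∧ A ω = a ∧ L ω = l ∧ M ω = m))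
      = Pr w (fun ω => S ω = 1 ∧ A ω = a ∧ L ω = l) := by
    intro l
    calc ∑ m, Pr w (fun ω => S ω = 1 ∧ A ω = a ∧ L ω = l ∧ M ω = m)
        = ∑ m, Pr w (fun ω => (S ω = 1 ∧ A ω = a ∧ L ω = l) ∧ M ω = m) :=
          Finset.sum_congr rfl fun m _ => Pr_congr' w fun ω => by tauto
      _ = Pr w (fun ω => S ω = 1 ∧ A ω = a ∧ L ω = l) := sum_fiber' w _ M
  -- inner sums
  have inner1 : ∀ l m,
      (∑ ω, if L ω = l ∧ M ω = m then
        (if S ω = 0 then w ω * (Y ω - T1h (L ω) (M ω)) else 0) else 0)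
      = (T1 l m - T1h l m) * Pr w (fun ω => S ω = 0 ∧ L ω = l ∧ M ω = m) := by
    intro l m
    have step : ∀ ω, (if L ω = l ∧ M ω = m then
        (if S ω = 0 then w ω * (Y ω - T1h (L ω) (M ω)) else 0) else 0)
        = (if S ω = 0 ∧ L ω = l ∧ M ω = m then w ω * Y ω else 0)
          - T1h l m * (if S ω = 0 ∧ L ω = l ∧ M ω = m then w ω else 0) := by
      intro ω
      by_cases h1 : L ω = l ∧ M ω = m
      · by_cases h2 : S ω = 0
        · rw [if_pos h1, if_pos h2, if_pos ⟨h2, h1⟩, if_pos ⟨h2, h1⟩, h1.1, h1.2]; ring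
        · rw [if_pos h1, if_neg h2, if_neg (fun hx => h2 hx.1),
            if_neg (fun hx => h2 hx.1)]; ring
      · rw [if_neg h1, if_neg (fun hx => h1 hx.2), if_neg (fun hx => h1 hx.2)]; ring
    rw [Finset.sum_congr rfl fun ω _ => step ω, Finset.sum_sub_distrib, ← Finset.mul_sum,
      HT1 l m]
    have hid : (∑ ω, if S ω = 0 ∧ L ω = l ∧ M ω = m then w ω else 0)
        = Pr w (fun ω => S ω = 0 ∧ L ω = l ∧ M ω = m) := by
      unfold Pr
      exact Finset.sum_congr rfl fun ω _ => ite_congr'' Iff.rfl _ _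
    rw [hid]; ring
  have inner2 : ∀ l m,
      (∑ ω, if L ω = l ∧ M ω = m then
        (if S ω = 1 ∧ A ω = a then w ω * (T1h (L ω) (M ω) - T2h (L ω) (A ω)) else 0) else 0)
      = (T1h l m - T2h l a) * Pr w (fun ω => S ω = 1 ∧ A ω = a ∧ L ω = l ∧ M ω = m) := by
    intro l m
    have step : ∀ ω, (if L ω = l ∧ M ω = m then
        (if S ω = 1 ∧ A ω = a then w ω * (T1h (L ω) (M ω) - T2h (L ω) (A ω)) else 0) else 0)
        = (T1h l m - T2h l a) *
            (if S ω = 1 ∧ A ω = a ∧ L ω = l ∧ M ω = m then w ω else 0) := by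
      intro ω
      by_cases h1 : L ω = l ∧ M ω = m
      · by_cases h2 : S ω = 1 ∧ A ω = a
        · rw [if_pos h1, if_pos h2, if_pos ⟨h2.1, h2.2, h1⟩, h1.1, h1.2, h2.2]; ring
        · rw [if_pos h1, if_neg h2, if_neg (fun hx => h2 ⟨hx.1, hx.2.1⟩)]; ring
      · rw [if_neg h1, if_neg (fun hx => h1 hx.2.2)]; ring
    rw [Finset.sum_congr rfl fun ω _ => step ω, ← Finset.mul_sum]
    have hid : (∑ ω, if S ω = 1 ∧ A ω = a ∧ L ω = l ∧ M ω = m then w ω else 0)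
        = Pr w (fun ω => S ω = 1 ∧ A ω = a ∧ L ω = l ∧ M ω = m) := by
      unfold Pr
      exact Finset.sum_congr rfl fun ω _ => ite_congr'' Iff.rfl _ _
    rw [hid]
  have inner3 : ∀ l m,
      (∑ ω, if L ω = l ∧ M ω = m then (if S ω = 0 then w ω else 0) else 0)
      = Pr w (fun ω => S ω = 0 ∧ L ω = l ∧ M ω = m) := by
    intro l m
    have step : ∀ ω, (if L ω = l ∧ M ω = m then (if S ω = 0 then w ω else 0) else 0)
        = (if S ω = 0 ∧ L ω = l ∧ M ω = m then w ω else 0) := by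
      intro ω
      by_cases h1 : L ω = l ∧ M ω = m
      · by_cases h2 : S ω = 0
        · rw [if_pos h1, if_pos h2, if_pos ⟨h2, h1⟩]
        · rw [if_pos h1, if_neg h2, if_neg (fun hx => h2 hx.1)]
      · rw [if_neg h1, if_neg (fun hx => h1 hx.2)]
    rw [Finset.sum_congr rfl fun ω _ => step ω]
    unfold Pr
    exact Finset.sum_congr rfl fun ω _ => ite_congr'' Iff.rfl _ _
  -- the three expectation pieces
  have hA1 : (∑ ω, fh (M ω) (L ω) * gh 1 (L ω) (M ω) / (eh (L ω) * gh 0 (L ω) (M ω)) *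
        (if S ω = 0 then w ω * (Y ω - T1h (L ω) (M ω)) else 0))
      = ∑ l, ∑ m, fh m l * gh 1 l m / (eh l * gh 0 l m) *
          ((T1 l m - T1h l m) * Pr w (fun ω => S ω = 0 ∧ L ω = l ∧ M ω = m)) := by
    calc (∑ ω, fh (M ω) (L ω) * gh 1 (L ω) (M ω) / (eh (L ω) * gh 0 (L ω) (M ω)) *
        (if S ω = 0 then w ω * (Y ω - T1h (L ω) (M ω)) else 0))
        = ∑ l, ∑ m, fh m l * gh 1 l m / (eh l * gh 0 l m) *
            ∑ ω, (if L ω = l ∧ M ω = m then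
              (if S ω = 0 then w ω * (Y ω - T1h (L ω) (M ω)) else 0) else 0) :=
          fiber_sum' (fun ω => if S ω = 0 then w ω * (Y ω - T1h (L ω) (M ω)) else 0)
            (fun l m => fh m l * gh 1 l m / (eh l * gh 0 l m)) L M
      _ = _ := Finset.sum_congr rfl fun l _ => Finset.sum_congr rfl fun m _ => by
            rw [inner1 l m]
  have hA2 : (∑ ω, hhat 0 (L ω) / (eh (L ω) * hhat 1 (L ω)) *
        (if S ω = 1 ∧ A ω = a then w ω * (T1h (L ω) (M ω) - T2h (L ω) (A ω)) else 0))
      = ∑ l, ∑ m, hhat 0 l / (eh l * hhat 1 l) *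
          ((T1h l m - T2h l a) *
            Pr w (fun ω => S ω = 1 ∧ A ω = a ∧ L ω = l ∧ M ω = m)) := by
    calc (∑ ω, hhat 0 (L ω) / (eh (L ω) * hhat 1 (L ω)) *
        (if S ω = 1 ∧ A ω = a then w ω * (T1h (L ω) (M ω) - T2h (L ω) (A ω)) else 0))
        = ∑ l, ∑ m, hhat 0 l / (eh l * hhat 1 l) *
            ∑ ω, (if L ω = l ∧ M ω = m then
              (if S ω = 1 ∧ A ω = a then w ω * (T1h (L ω) (M ω) - T2h (L ω) (A ω)) else 0)
              else 0) :=
          fiber_sum'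
            (fun ω => if S ω = 1 ∧ A ω = a then
              w ω * (T1h (L ω) (M ω) - T2h (L ω) (A ω)) else 0)
            (fun l _ => hhat 0 l / (eh l * hhat 1 l)) L M
      _ = _ := Finset.sum_congr rfl fun l _ => Finset.sum_congr rfl fun m _ => by
            rw [inner2 l m]
  have hA3 : (∑ ω, T2h (L ω) a * (if S ω = 0 then w ω else 0))
      = ∑ l, T2h l a * Pr w (fun ω => S ω = 0 ∧ L ω = l) := by
    calc (∑ ω, T2h (L ω) a * (if S ω = 0 then w ω else 0))
        = ∑ l, ∑ m, T2h l a *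
            ∑ ω, (if L ω = l ∧ M ω = m then (if S ω = 0 then w ω else 0) else 0) :=
          fiber_sum' (fun ω => if S ω = 0 then w ω else 0) (fun l _ => T2h l a) L M
      _ = ∑ l, ∑ m, T2h l a * Pr w (fun ω => S ω = 0 ∧ L ω = l ∧ M ω = m) :=
          Finset.sum_congr rfl fun l _ => Finset.sum_congr rfl fun m _ => by
            rw [inner3 l m]
      _ = ∑ l, T2h l a * Pr w (fun ω => S ω = 0 ∧ L ω = l) := by
          refine Finset.sum_congr rfl fun l _ => ?_
          rw [← Finset.mul_sum, hcol0 l]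
  -- pointwise decomposition of the estimating function
  have hpoint : ∀ ω, w ω *
      Hfun S L A M Y a (1 / Pr w (fun ω => S ω = 0)) eh fh gh hhat T2h T1h ω
      = (1 / Pr w (fun ω => S ω = 0)) *
        (fh (M ω) (L ω) * gh 1 (L ω) (M ω) / (eh (L ω) * gh 0 (L ω) (M ω)) *
            (if S ω = 0 then w ω * (Y ω - T1h (L ω) (M ω)) else 0)
          + hhat 0 (L ω) / (eh (L ω) * hhat 1 (L ω)) *
            (if S ω = 1 ∧ A ω = a then w ω * (T1h (L ω) (M ω) - T2h (L ω) (A ω)) else 0)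
          + T2h (L ω) a * (if S ω = 0 then w ω else 0)) := by
    intro ω
    simp only [Hfun]
    split_ifs <;> ring
  have hLHS : (∑ ω, w ω *
      Hfun S L A M Y a (1 / Pr w (fun ω => S ω = 0)) eh fh gh hhat T2h T1h ω)
      = (1 / Pr w (fun ω => S ω = 0)) *
        ((∑ l, ∑ m, fh m l * gh 1 l m / (eh l * gh 0 l m) *
            ((T1 l m - T1h l m) * Pr w (fun ω => S ω = 0 ∧ L ω = l ∧ M ω = m)))
         + (∑ l, ∑ m, hhat 0 l / (eh l * hhat 1 l) *
            ((T1h l m - T2h l a) *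
              Pr w (fun ω => S ω = 1 ∧ A ω = a ∧ L ω = l ∧ M ω = m)))
         + ∑ l, T2h l a * Pr w (fun ω => S ω = 0 ∧ L ω = l)) := by
    calc (∑ ω, w ω *
        Hfun S L A M Y a (1 / Pr w (fun ω => S ω = 0)) eh fh gh hhat T2h T1h ω)
        = ∑ ω, (1 / Pr w (fun ω => S ω = 0)) *
          (fh (M ω) (L ω) * gh 1 (L ω) (M ω) / (eh (L ω) * gh 0 (L ω) (M ω)) *
              (if S ω = 0 then w ω * (Y ω - T1h (L ω) (M ω)) else 0)
            + hhat 0 (L ω) / (eh (L ω) * hhat 1 (L ω)) *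
              (if S ω = 1 ∧ A ω = a then w ω * (T1h (L ω) (M ω) - T2h (L ω) (A ω)) else 0)
            + T2h (L ω) a * (if S ω = 0 then w ω else 0)) :=
          Finset.sum_congr rfl fun ω _ => hpoint ω
      _ = (1 / Pr w (fun ω => S ω = 0)) *
          ∑ ω, (fh (M ω) (L ω) * gh 1 (L ω) (M ω) / (eh (L ω) * gh 0 (L ω) (M ω)) *
              (if S ω = 0 then w ω * (Y ω - T1h (L ω) (M ω)) else 0)
            + hhat 0 (L ω) / (eh (L ω) * hhat 1 (L ω)) *
              (if S ω = 1 ∧ A ω = a then w ω * (T1h (L ω) (M ω) - T2h (L ω) (A ω)) else 0)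
            + T2h (L ω) a * (if S ω = 0 then w ω else 0)) := by
          rw [← Finset.mul_sum]
      _ = _ := by
          rw [Finset.sum_add_distrib, Finset.sum_add_distrib, hA1, hA2, hA3]
  -- PsiA
  have hPsi : PsiA w S L A M Y a
      = (1 / Pr w (fun ω => S ω = 0)) *
        ∑ l, T2 l a * Pr w (fun ω => S ω = 0 ∧ L ω = l) := by
    unfold PsiA
    rw [Finset.sum_comm]
    have hterm : ∀ l m, CE w Y (fun ω => M ω = m ∧ L ω = l ∧ S ω = 0) *
        CP w (fun ω => M ω = m) (fun ω => L ω = l ∧ A ω = a ∧ S ω = 1) *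
        CP w (fun ω => L ω = l) (fun ω => S ω = 0)
        = (T1 l m * Pr w (fun ω => S ω = 1 ∧ A ω = a ∧ L ω = l ∧ M ω = m)) *
          (Pr w (fun ω => S ω = 0 ∧ L ω = l) /
            (Pr w (fun ω => S ω = 1 ∧ A ω = a ∧ L ω = l) * Pr w (fun ω => S ω = 0))) := by
      intro l m
      have hCE : CE w Y (fun ω => M ω = m ∧ L ω = l ∧ S ω = 0) = T1 l m := by
        rw [hT1 l m]
        unfold CE
        congr 1
        · exact sum_ite_congr' _ fun ω => by tauto
        · exact Pr_congr' w fun ω => by tauto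
      have hCP1 : CP w (fun ω => M ω = m) (fun ω => L ω = l ∧ A ω = a ∧ S ω = 1)
          = Pr w (fun ω => S ω = 1 ∧ A ω = a ∧ L ω = l ∧ M ω = m) /
            Pr w (fun ω => S ω = 1 ∧ A ω = a ∧ L ω = l) := by
        unfold CP
        congr 1
        · exact Pr_congr' w fun ω => by tauto
        · exact Pr_congr' w fun ω => by tauto
      have hCP2 : CP w (fun ω => L ω = l) (fun ω => S ω = 0)
          = Pr w (fun ω => S ω = 0 ∧ L ω = l) / Pr w (fun ω => S ω = 0) := by
        unfold CP
        congr 1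
        exact Pr_congr' w fun ω => by tauto
      rw [hCE, hCP1, hCP2]
      ring
    calc ∑ l, ∑ m, (CE w Y (fun ω => M ω = m ∧ L ω = l ∧ S ω = 0) *
        CP w (fun ω => M ω = m) (fun ω => L ω = l ∧ A ω = a ∧ S ω = 1) *
        CP w (fun ω => L ω = l) (fun ω => S ω = 0))
        = ∑ l, ∑ m, (T1 l m * Pr w (fun ω => S ω = 1 ∧ A ω = a ∧ L ω = l ∧ M ω = m)) *
          (Pr w (fun ω => S ω = 0 ∧ L ω = l) /
            (Pr w (fun ω => S ω = 1 ∧ A ω = a ∧ L ω = l) * Pr w (fun ω => S ω = 0))) :=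
          Finset.sum_congr rfl fun l _ => Finset.sum_congr rfl fun m _ => hterm l m
      _ = ∑ l, (∑ m, T1 l m * Pr w (fun ω => S ω = 1 ∧ A ω = a ∧ L ω = l ∧ M ω = m)) *
          (Pr w (fun ω => S ω = 0 ∧ L ω = l) /
            (Pr w (fun ω => S ω = 1 ∧ A ω = a ∧ L ω = l) * Pr w (fun ω => S ω = 0))) :=
          Finset.sum_congr rfl fun l _ => (Finset.sum_mul _ _ _).symm
      _ = ∑ l, (T2 l a * Pr w (fun ω => S ω = 1 ∧ A ω = a ∧ L ω = l)) *
          (Pr w (fun ω => S ω = 0 ∧ L ω = l) /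
            (Pr w (fun ω => S ω = 1 ∧ A ω = a ∧ L ω = l) * Pr w (fun ω => S ω = 0))) :=
          Finset.sum_congr rfl fun l _ => by rw [← HT2 l]
      _ = ∑ l, (1 / Pr w (fun ω => S ω = 0)) *
          (T2 l a * Pr w (fun ω => S ω = 0 ∧ L ω = l)) :=
          Finset.sum_congr rfl fun l _ =>
            aux_div _ _ _ _ (ne_of_gt (hP1al l)) (ne_of_gt hposS0)
      _ = (1 / Pr w (fun ω => S ω = 0)) *
          ∑ l, T2 l a * Pr w (fun ω => S ω = 0 ∧ L ω = l) := (Finset.mul_sum _ _ _).symm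
  -- the per-l second-order cancellation
  have hmain : ∀ l, (∑ m, fh m l * gh 1 l m / (eh l * gh 0 l m) *
        ((T1 l m - T1h l m) * Pr w (fun ω => S ω = 0 ∧ L ω = l ∧ M ω = m)))
      + (∑ m, hhat 0 l / (eh l * hhat 1 l) *
        ((T1h l m - T2h l a) * Pr w (fun ω => S ω = 1 ∧ A ω = a ∧ L ω = l ∧ M ω = m)))
      + (T2h l a - T2 l a) * Pr w (fun ω => S ω = 0 ∧ L ω = l) = 0 := by
    intro l
    have hsub0 : ∀ m, Pr w (fun ω => S ω = 0 ∧ L ω = l ∧ M ω = m)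
        = g 0 l m * (h 0 l * Pr w (fun ω => L ω = l)) := fun m => by
      rw [Hg0 l m, Hh0 l]
    have hsub1 : ∀ m, Pr w (fun ω => S ω = 1 ∧ A ω = a ∧ L ω = l ∧ M ω = m)
        = f m l * (g 1 l m * (h 1 l * Pr w (fun ω => L ω = l))) := fun m => by
      rw [Hf l m, Hg1 l m, Hh1 l]
    have hS1 : (∑ m, f m l * (g 1 l m * (h 1 l * Pr w (fun ω => L ω = l))))
        = e l * (h 1 l * Pr w (fun ω => L ω = l)) := by
      calc (∑ m, f m l * (g 1 l m * (h 1 l * Pr w (fun ω => L ω = l))))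
          = ∑ m, Pr w (fun ω => S ω = 1 ∧ A ω = a ∧ L ω = l ∧ M ω = m) :=
            Finset.sum_congr rfl fun m _ => (hsub1 m).symm
        _ = Pr w (fun ω => S ω = 1 ∧ A ω = a ∧ L ω = l) := hcol1 l
        _ = e l * Pr w (fun ω => S ω = 1 ∧ L ω = l) := He l
        _ = e l * (h 1 l * Pr w (fun ω => L ω = l)) := by rw [Hh1 l]
    have hS2 : (∑ m, T1 l m * (f m l * (g 1 l m * (h 1 l * Pr w (fun ω => L ω = l)))))
        = T2 l a * (e l * (h 1 l * Pr w (fun ω => L ω = l))) := by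
      calc (∑ m, T1 l m * (f m l * (g 1 l m * (h 1 l * Pr w (fun ω => L ω = l)))))
          = ∑ m, T1 l m * Pr w (fun ω => S ω = 1 ∧ A ω = a ∧ L ω = l ∧ M ω = m) :=
            Finset.sum_congr rfl fun m _ => by rw [hsub1 m]
        _ = T2 l a * Pr w (fun ω => S ω = 1 ∧ A ω = a ∧ L ω = l) := (HT2 l).symm
        _ = T2 l a * (e l * Pr w (fun ω => S ω = 1 ∧ L ω = l)) := by rw [He l]
        _ = T2 l a * (e l * (h 1 l * Pr w (fun ω => L ω = l))) := by rw [Hh1 l]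
    have hrw1 : (∑ m, fh m l * gh 1 l m / (eh l * gh 0 l m) *
          ((T1 l m - T1h l m) * Pr w (fun ω => S ω = 0 ∧ L ω = l ∧ M ω = m)))
        = ∑ m, fh m l * gh 1 l m / (eh l * gh 0 l m) *
          ((T1 l m - T1h l m) * (g 0 l m * (h 0 l * Pr w (fun ω => L ω = l)))) :=
      Finset.sum_congr rfl fun m _ => by rw [hsub0 m]
    have hrw2 : (∑ m, hhat 0 l / (eh l * hhat 1 l) *
          ((T1h l m - T2h l a) * Pr w (fun ω => S ω = 1 ∧ A ω = a ∧ L ω = l ∧ M ω = m)))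
        = ∑ m, hhat 0 l / (eh l * hhat 1 l) *
          ((T1h l m - T2h l a) * (f m l * (g 1 l m * (h 1 l * Pr w (fun ω => L ω = l))))) :=
      Finset.sum_congr rfl fun m _ => by rw [hsub1 m]
    rw [hrw1, hrw2, Hh0 l]
    have hk1 : ∀ m, fh m l * gh 1 l m / (eh l * gh 0 l m) *
          ((T1 l m - T1h l m) * (g 0 l m * (h 0 l * Pr w (fun ω => L ω = l))))
        + hhat 0 l / (eh l * hhat 1 l) *
          ((T1h l m - T2h l a) * (f m l * (g 1 l m * (h 1 l * Pr w (fun ω => L ω = l)))))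
        = hhat 0 l / (eh l * hhat 1 l) *
            (T1 l m * (f m l * (g 1 l m * (h 1 l * Pr w (fun ω => L ω = l)))))
          - (hhat 0 l / (eh l * hhat 1 l) * T2h l a) *
            (f m l * (g 1 l m * (h 1 l * Pr w (fun ω => L ω = l)))) := by
      intro m
      have k1 := key1' (eh l) (gh 0 l m) (gh 1 l m) (hhat 0 l) (hhat 1 l) (f m l)
        (fh m l) (g 0 l m) (g 1 l m) (h 0 l) (h 1 l) (T1 l m - T1h l m)
        (heh0 l) (hghne 0 m l) (hhhne 1 l) (p2 l m) (p3 0 l m) (p3 1 l m)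
        (p6 0 l m) (p6 1 l m)
      linear_combination (Pr w (fun ω => L ω = l)) * k1
    rw [← Finset.sum_add_distrib, Finset.sum_congr rfl fun m _ => hk1 m,
      Finset.sum_sub_distrib, ← Finset.mul_sum, ← Finset.mul_sum, hS2, hS1]
    have k2 := key2' (eh l) (hhat 0 l) (hhat 1 l) (e l) (h 0 l) (h 1 l)
      (T2 l a - T2h l a) (heh0 l) (hhhne 1 l) (p4 l a) (p5 0 l a) (p5 1 l a)
    linear_combination (Pr w (fun ω => L ω = l)) * k2
  -- assemble
  rw [hLHS, hPsi, ← mul_sub]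
  have hcomb : ((∑ l, ∑ m, fh m l * gh 1 l m / (eh l * gh 0 l m) *
        ((T1 l m - T1h l m) * Pr w (fun ω => S ω = 0 ∧ L ω = l ∧ M ω = m)))
      + (∑ l, ∑ m, hhat 0 l / (eh l * hhat 1 l) *
        ((T1h l m - T2h l a) * Pr w (fun ω => S ω = 1 ∧ A ω = a ∧ L ω = l ∧ M ω = m)))
      + ∑ l, T2h l a * Pr w (fun ω => S ω = 0 ∧ L ω = l))
      - (∑ l, T2 l a * Pr w (fun ω => S ω = 0 ∧ L ω = l))
      = ∑ l, ((∑ m, fh m l * gh 1 l m / (eh l * gh 0 l m) *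
          ((T1 l m - T1h l m) * Pr w (fun ω => S ω = 0 ∧ L ω = l ∧ M ω = m)))
        + (∑ m, hhat 0 l / (eh l * hhat 1 l) *
          ((T1h l m - T2h l a) * Pr w (fun ω => S ω = 1 ∧ A ω = a ∧ L ω = l ∧ M ω = m)))
        + (T2h l a - T2 l a) * Pr w (fun ω => S ω = 0 ∧ L ω = l)) := by
    rw [← Finset.sum_add_distrib, ← Finset.sum_add_distrib, ← Finset.sum_sub_distrib]
    exact Finset.sum_congr rfl fun l _ => by ring
  rw [hcomb, Finset.sum_eq_zero fun l _ => hmain l, mul_zero]
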